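/- arXiv:2401.04341 — 2 statements merged into one kernel-verified Lean document; each statement's English description precedes it below -/
import Mathlib

section
/- Let A be a commutative local ring, G_A = A^×/(A^×)², and for a ∈ A^× write ⟨a⟩ for its class in G_A and ⟨⟨a⟩⟩ = ⟨a⟩ − 1 ∈ ℤ[G_A]. Let W_A = {a ∈ A^× : 1 − a ∈ A^×}, and let a, b ∈ W_A with a/b ∈ W_A. Set x = (1 − a⁻¹)/(1 − b⁻¹) and y = (1 − a)/(1 − b); then b/a, x, y ∈ W_A and the identity ⟨⟨a⟩⟩⟨⟨1−a⟩⟩ − ⟨⟨b⟩⟩⟨⟨1−b⟩⟩ + ⟨a⟩⟨⟨b/a⟩⟩⟨⟨1−b/a⟩⟩ − ⟨a⁻¹−1⟩⟨⟨x⟩⟩⟨⟨1−x⟩⟩ + ⟨1−a⟩⟨⟨y⟩⟩⟨⟨1−y⟩⟩ = 0 holds in the group ring ℤ[G_A]. (This says that the map [a] ↦ ⟨⟨a⟩⟩⟨⟨1−a⟩⟩ kills the defining five-term relations of RP(A), i.e. λ₁ : RP(A) → ℤ[G_A] is a well-defined ℤ[G_A]-homomorphism.) -/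
/-- The subgroup of squares in a commutative group. -/
def sqGroup (G : Type*) [CommGroup G] : Subgroup G := (powMonoidHom 2 : G →* G).range

/-- The square class group `G_A = A^×/(A^×)²`. -/
abbrev SqClass (A : Type) [CommRing A] := Aˣ ⧸ sqGroup Aˣ

/-- `⟨u⟩ ∈ ℤ[G_A]`: the basis element of the group ring given by the square class of a unit. -/
noncomputable def cls (A : Type) [CommRing A] (u : Aˣ) : MonoidAlgebra ℤ (SqClass A) :=
  MonoidAlgebra.single (QuotientGroup.mk u) 1

/-- `⟨⟨u⟩⟩ = ⟨u⟩ - 1 ∈ ℤ[G_A]`. -/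
noncomputable def bb (A : Type) [CommRing A] (u : Aˣ) : MonoidAlgebra ℤ (SqClass A) :=
  cls A u - 1

lemma cls_mul (A : Type) [CommRing A] (u v : Aˣ) : cls A (u * v) = cls A u * cls A v := by
  simp [cls, MonoidAlgebra.single_mul_single]

lemma cls_one (A : Type) [CommRing A] : cls A 1 = 1 := by
  simp [cls, MonoidAlgebra.one_def]

lemma cls_sq (A : Type) [CommRing A] (u : Aˣ) : cls A u * cls A u = 1 := by
  rw [← cls_mul]
  have h : (QuotientGroup.mk (u * u) : SqClass A) = 1 := by
    rw [QuotientGroup.eq_one_iff]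
    exact ⟨u, by simp [powMonoidHom_apply, pow_two]⟩
  simp [cls, h, MonoidAlgebra.one_def]

lemma cls_eq_of_mul (A : Type) [CommRing A] (u v w : Aˣ) (h : u * v = w) :
    cls A u = cls A w * cls A v := by
  have h2 : cls A u * cls A v = cls A w := by rw [← cls_mul, h]
  calc cls A u = cls A u * (cls A v * cls A v) := by rw [cls_sq, mul_one]
    _ = (cls A u * cls A v) * cls A v := (mul_assoc _ _ _).symm
    _ = cls A w * cls A v := by rw [h2]

lemma cls_inv (A : Type) [CommRing A] (u : Aˣ) : cls A u⁻¹ = cls A u := by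
  have h : cls A u⁻¹ = cls A 1 * cls A u := cls_eq_of_mul A u⁻¹ u 1 (inv_mul_cancel u)
  rw [cls_one, one_mul] at h
  exact h

/-- **Statement 12.** Let `A` be a commutative local ring, `a, b ∈ W_A` with `a/b ∈ W_A`
(witnessed by units `a1 = 1 - a`, `b1 = 1 - b`, `c1 = 1 - a/b`), and let
`x = (1-a⁻¹)/(1-b⁻¹)`, `y = (1-a)/(1-b)`. Then `b/a, x, y ∈ W_A` and
`⟨⟨a⟩⟩⟨⟨1-a⟩⟩ - ⟨⟨b⟩⟩⟨⟨1-b⟩⟩ + ⟨a⟩⟨⟨b/a⟩⟩⟨⟨1-b/a⟩⟩ - ⟨a⁻¹-1⟩⟨⟨x⟩⟩⟨⟨1-x⟩⟩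
  + ⟨1-a⟩⟨⟨y⟩⟩⟨⟨1-y⟩⟩ = 0` in `ℤ[G_A]`; that is, `λ₁ : RP(A) → ℤ[G_A]`,
`[a] ↦ ⟨⟨a⟩⟩⟨⟨1-a⟩⟩`, kills the five-term relations of `RP(A)`. -/
theorem lambda1_five_term (A : Type) [CommRing A] [IsLocalRing A]
    (a b a1 b1 c1 x y : Aˣ)
    (ha1 : (a1 : A) = 1 - a)
    (hb1 : (b1 : A) = 1 - b)
    (hc1 : (c1 : A) = 1 - ((a * b⁻¹ : Aˣ) : A))
    (hx : (x : A) * (1 - ((b⁻¹ : Aˣ) : A)) = 1 - ((a⁻¹ : Aˣ) : A))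
    (hy : (y : A) * (1 - (b : A)) = 1 - (a : A)) :
    IsUnit ((1 : A) - ((b * a⁻¹ : Aˣ) : A)) ∧
    IsUnit ((1 : A) - (x : A)) ∧
    IsUnit ((1 : A) - (y : A)) ∧
    ∀ d x1 y1 : Aˣ,
      (d : A) = 1 - ((b * a⁻¹ : Aˣ) : A) →
      (x1 : A) = 1 - (x : A) →
      (y1 : A) = 1 - (y : A) →
      bb A a * bb A a1 - bb A b * bb A b1
        + cls A a * (bb A (b * a⁻¹) * bb A d)
        - cls A (a⁻¹ * a1) * (bb A x * bb A x1)
        + cls A a1 * (bb A y * bb A y1) = 0 := by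
  rw [Units.val_mul] at hc1
  -- key elementwise identities
  have hbc1 : (b : A) * c1 = b - a := by
    rw [hc1]; linear_combination (-(a : A)) * b.mul_inv
  have hXab : (x : A) * a * b1 = b * a1 := by
    rw [ha1, hb1]
    linear_combination (-((a : A) * b)) * hx + (-((x : A) * a)) * b.mul_inv + (b : A) * a.mul_inv
  have hx1e : (1 - (x : A)) * ((a : A) * b1) = -((b : A) * c1) := by
    linear_combination -hXab + hbc1 + (a : A) * hb1 - (b : A) * ha1
  have hy1e : (1 - (y : A)) * (b1 : A) = -((b : A) * c1) := by
    have hYb1 : (y : A) * b1 = a1 := by rw [ha1, hb1]; exact hy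
    linear_combination -hYb1 + hbc1 + hb1 - ha1
  refine ⟨⟨-(b * c1 * a⁻¹), ?_⟩, ⟨-(b * c1 * a⁻¹ * b1⁻¹), ?_⟩, ⟨-(b * c1 * b1⁻¹), ?_⟩, ?_⟩
  · show ((-(b * c1 * a⁻¹) : Aˣ) : A) = _
    rw [Units.val_neg, Units.val_mul, Units.val_mul, Units.val_mul]
    linear_combination (-((a⁻¹ : Aˣ) : A)) * hbc1 + a.mul_inv
  · show ((-(b * c1 * a⁻¹ * b1⁻¹) : Aˣ) : A) = _
    rw [Units.val_neg, Units.val_mul, Units.val_mul, Units.val_mul]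
    linear_combination (-(((a⁻¹ : Aˣ) : A) * ((b1⁻¹ : Aˣ) : A))) * hx1e
      + (1 - (x : A)) * (((b1 : Aˣ) : A) * ((b1⁻¹ : Aˣ) : A)) * a.mul_inv
      + (1 - (x : A)) * b1.mul_inv
  · show ((-(b * c1 * b1⁻¹) : Aˣ) : A) = _
    rw [Units.val_neg, Units.val_mul, Units.val_mul]
    linear_combination (-((b1⁻¹ : Aˣ) : A)) * hy1e + (1 - (y : A)) * b1.mul_inv
  · intro d x1 y1 hd hx1 hy1
    rw [Units.val_mul] at hd
    -- unit equalities
    have Ud : d * a = -(b * c1) := by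
      apply Units.ext
      rw [Units.val_mul, Units.val_neg, Units.val_mul, hd]
      linear_combination hbc1 + (-(b : A)) * a.inv_mul
    have Ux : x * (a * b1) = b * a1 := by
      apply Units.ext
      rw [Units.val_mul, Units.val_mul, Units.val_mul]
      linear_combination hXab
    have Ux1 : x1 * (a * b1) = -(b * c1) := by
      apply Units.ext
      rw [Units.val_mul, Units.val_mul, Units.val_neg, Units.val_mul, hx1]
      linear_combination hx1e
    have Uy : y * b1 = a1 := by
      apply Units.ext
      rw [Units.val_mul, ha1, hb1]
      exact hy
    have Uy1 : y1 * b1 = -(b * c1) := by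
      apply Units.ext
      rw [Units.val_mul, Units.val_neg, Units.val_mul, hy1]
      linear_combination hy1e
    -- class computations
    set R := MonoidAlgebra ℤ (SqClass A)
    set n : R := cls A (-(b * c1)) with hn
    set p : R := cls A a with hp
    set q : R := cls A b with hq
    set r : R := cls A a1 with hr
    set s : R := cls A b1 with hs
    have Cd : cls A d = n * p := cls_eq_of_mul A d a _ Ud
    have Cx : cls A x = (q * r) * (p * s) := by
      have h := cls_eq_of_mul A x (a * b1) (b * a1) Ux
      rw [cls_mul, cls_mul] at h
      exact h
    have Cx1 : cls A x1 = n * (p * s) := by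
      have h := cls_eq_of_mul A x1 (a * b1) _ Ux1
      rw [cls_mul] at h
      exact h
    have Cy : cls A y = r * s := by
      have h := cls_eq_of_mul A y b1 a1 Uy
      exact h
    have Cy1 : cls A y1 = n * s := cls_eq_of_mul A y1 b1 _ Uy1
    have Cba : cls A (b * a⁻¹) = q * p := by rw [cls_mul, cls_inv]
    have Caa1 : cls A (a⁻¹ * a1) = p * r := by rw [cls_mul, cls_inv]
    -- square facts
    have sp : p * p = 1 := cls_sq A a
    have sr : r * r = 1 := cls_sq A a1
    have ss : s * s = 1 := cls_sq A b1
    simp only [bb, Cd, Cx, Cx1, Cy, Cy1, Cba, Caa1, ← hp, ← hq, ← hr, ← hs, ← hn]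
    linear_combination
      (-q + q*r*r*s - n + n*r*s + n*p*q - n*p*q*r*r*s*s) * sp
      + (-s + q*s + n*s*s - n*p*q*s*s) * sr
      + (n - n*p*q) * ss
end

section
/- Let A be a commutative local ring and W_A = {a ∈ A^× : 1 − a ∈ A^×}. Let S²_ℤ(A^×) = (A^× ⊗_ℤ A^×)/⟨u ⊗ v + v ⊗ u : u, v ∈ A^×⟩. Let a, b ∈ W_A with a/b ∈ W_A, and set x = (1 − a⁻¹)/(1 − b⁻¹) and y = (1 − a)/(1 − b). Then the identity a ⊗ (1−a) − b ⊗ (1−b) + (b/a) ⊗ (1−b/a) − x ⊗ (1−x) + y ⊗ (1−y) = 0 holds in S²_ℤ(A^×). (This says that the map [a] ↦ a ⊗ (1−a) kills the defining five-term relations of RP(A), i.e. λ₂ : RP(A) → S²_ℤ(A^×) is well defined when S²_ℤ(A^×) carries the trivial G_A-action.) -/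
open TensorProduct

/-- The relations submodule defining `S²_ℤ(A^×)`: the span of the elements `u ⊗ v + v ⊗ u`. -/
def S2rel (A : Type) [CommRing A] :
    Submodule ℤ (TensorProduct ℤ (Additive Aˣ) (Additive Aˣ)) :=
  Submodule.span ℤ {z | ∃ u v : Aˣ,
    z = (Additive.ofMul u) ⊗ₜ[ℤ] (Additive.ofMul v) +
        (Additive.ofMul v) ⊗ₜ[ℤ] (Additive.ofMul u)}

/-- `S²_ℤ(A^×) = (A^× ⊗_ℤ A^×)/⟨u ⊗ v + v ⊗ u⟩`. -/
abbrev S2 (A : Type) [CommRing A] : Type :=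
  TensorProduct ℤ (Additive Aˣ) (Additive Aˣ) ⧸ S2rel A

/-- The image of `u ⊗ v` in `S²_ℤ(A^×)`. -/
noncomputable def symCls (A : Type) [CommRing A] (u v : Aˣ) : S2 A :=
  Submodule.Quotient.mk ((Additive.ofMul u) ⊗ₜ[ℤ] (Additive.ofMul v))

lemma symCls_mul_left (A : Type) [CommRing A] (u v w : Aˣ) :
    symCls A (u * v) w = symCls A u w + symCls A v w := by
  unfold symCls
  rw [show Additive.ofMul (u * v) = Additive.ofMul u + Additive.ofMul v from rfl,
    add_tmul, Submodule.Quotient.mk_add]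

lemma symCls_mul_right (A : Type) [CommRing A] (u v w : Aˣ) :
    symCls A u (v * w) = symCls A u v + symCls A u w := by
  unfold symCls
  rw [show Additive.ofMul (v * w) = Additive.ofMul v + Additive.ofMul w from rfl,
    tmul_add, Submodule.Quotient.mk_add]

lemma symCls_one_left (A : Type) [CommRing A] (w : Aˣ) :
    symCls A 1 w = 0 := by
  unfold symCls
  rw [show Additive.ofMul (1 : Aˣ) = 0 from rfl, zero_tmul, Submodule.Quotient.mk_zero]

lemma symCls_one_right (A : Type) [CommRing A] (w : Aˣ) :
    symCls A w 1 = 0 := by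
  unfold symCls
  rw [show Additive.ofMul (1 : Aˣ) = 0 from rfl, tmul_zero, Submodule.Quotient.mk_zero]

lemma symCls_inv_left (A : Type) [CommRing A] (u w : Aˣ) :
    symCls A u⁻¹ w = - symCls A u w := by
  have h := symCls_mul_left A u u⁻¹ w
  rw [mul_inv_cancel, symCls_one_left] at h
  exact eq_neg_of_add_eq_zero_right h.symm

lemma symCls_inv_right (A : Type) [CommRing A] (u w : Aˣ) :
    symCls A u w⁻¹ = - symCls A u w := by
  have h := symCls_mul_right A u w w⁻¹
  rw [mul_inv_cancel, symCls_one_right] at h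
  exact eq_neg_of_add_eq_zero_right h.symm

lemma symCls_swap (A : Type) [CommRing A] (u v : Aˣ) :
    symCls A v u = - symCls A u v := by
  have h : symCls A u v + symCls A v u = 0 := by
    unfold symCls
    rw [← Submodule.Quotient.mk_add]
    exact (Submodule.Quotient.mk_eq_zero _).2 (Submodule.subset_span ⟨u, v, rfl⟩)
  exact eq_neg_of_add_eq_zero_right h

/-- **Statement 13.** Let `A` be a commutative local ring, `a, b ∈ W_A` with `a/b ∈ W_A`
(witnessed by units `a1 = 1 - a`, `b1 = 1 - b`, `c1 = 1 - a/b`), and let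
`x = (1-a⁻¹)/(1-b⁻¹)`, `y = (1-a)/(1-b)`. Then
`a ⊗ (1-a) - b ⊗ (1-b) + (b/a) ⊗ (1-b/a) - x ⊗ (1-x) + y ⊗ (1-y) = 0` holds in `S²_ℤ(A^×)`;
that is, `λ₂ : RP(A) → S²_ℤ(A^×)`, `[a] ↦ a ⊗ (1-a)`, kills the five-term relations. -/
theorem lambda2_five_term (A : Type) [CommRing A] [IsLocalRing A]
    (a b a1 b1 c1 x y : Aˣ)
    (ha1 : (a1 : A) = 1 - a)
    (hb1 : (b1 : A) = 1 - b)
    (hc1 : (c1 : A) = 1 - ((a * b⁻¹ : Aˣ) : A))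
    (hx : (x : A) * (1 - ((b⁻¹ : Aˣ) : A)) = 1 - ((a⁻¹ : Aˣ) : A))
    (hy : (y : A) * (1 - (b : A)) = 1 - (a : A)) :
    IsUnit ((1 : A) - ((b * a⁻¹ : Aˣ) : A)) ∧
    IsUnit ((1 : A) - (x : A)) ∧
    IsUnit ((1 : A) - (y : A)) ∧
    ∀ d x1 y1 : Aˣ,
      (d : A) = 1 - ((b * a⁻¹ : Aˣ) : A) →
      (x1 : A) = 1 - (x : A) →
      (y1 : A) = 1 - (y : A) →
      symCls A a a1 - symCls A b b1 + symCls A (b * a⁻¹) d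
        - symCls A x x1 + symCls A y y1 = 0 := by
  have Ha : (a : A) * ((a⁻¹ : Aˣ) : A) = 1 := a.mul_inv
  have Hb : (b : A) * ((b⁻¹ : Aˣ) : A) = 1 := b.mul_inv
  have Hv : (1 - (b : A)) * ((b1⁻¹ : Aˣ) : A) = 1 := by rw [← hb1]; exact b1.mul_inv
  have hc1' : (c1 : A) = 1 - (a : A) * ((b⁻¹ : Aˣ) : A) := by
    rw [hc1, Units.val_mul]
  -- element-level values of x and y
  have Ex : (x : A) = ((a⁻¹ : Aˣ) : A) * (1 - (a : A)) * ((b : A) * ((b1⁻¹ : Aˣ) : A)) := by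
    linear_combination (-((b : A) * ((b1⁻¹ : Aˣ) : A))) * hx
      + ((b : A) * ((b1⁻¹ : Aˣ) : A)) * Ha
      - ((x : A) * ((b1⁻¹ : Aˣ) : A)) * Hb - (x : A) * Hv
  have Ey : (y : A) = (1 - (a : A)) * ((b1⁻¹ : Aˣ) : A) := by
    linear_combination ((b1⁻¹ : Aˣ) : A) * hy - (y : A) * Hv
  -- the three unit values
  have U3 : (1 : A) - ((b * a⁻¹ : Aˣ) : A) = (((-1 : Aˣ) * (a⁻¹ * (b * c1)) : Aˣ) : A) := by
    simp only [Units.val_mul, Units.val_neg, Units.val_one]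
    rw [hc1']
    linear_combination (-((b : A) * ((b⁻¹ : Aˣ) : A))) * Ha - Hb
  have U4 : (1 : A) - (x : A) = ((((-1 : Aˣ) * (a⁻¹ * (b * c1))) * b1⁻¹ : Aˣ) : A) := by
    simp only [Units.val_mul, Units.val_neg, Units.val_one]
    rw [hc1', Ex]
    linear_combination ((b : A) * ((b1⁻¹ : Aˣ) : A)
        - (b : A) * ((b⁻¹ : Aˣ) : A) * ((b1⁻¹ : Aˣ) : A)) * Ha
      - ((b1⁻¹ : Aˣ) : A) * Hb - Hv
  have U5 : (1 : A) - (y : A) = ((((-1 : Aˣ) * (b * c1)) * b1⁻¹ : Aˣ) : A) := by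
    simp only [Units.val_mul, Units.val_neg, Units.val_one]
    rw [hc1', Ey]
    linear_combination (-(a : A) * ((b1⁻¹ : Aˣ) : A)) * Hb - Hv
  refine ⟨⟨_, U3.symm⟩, ⟨_, U4.symm⟩, ⟨_, U5.symm⟩, ?_⟩
  intro d x1 y1 hd hx1 hy1
  have hdu : d = (-1 : Aˣ) * (a⁻¹ * (b * c1)) := Units.ext (hd.trans U3)
  have hx1u : x1 = ((-1 : Aˣ) * (a⁻¹ * (b * c1))) * b1⁻¹ := Units.ext (hx1.trans U4)
  have hy1u : y1 = ((-1 : Aˣ) * (b * c1)) * b1⁻¹ := Units.ext (hy1.trans U5)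
  have hxu : x = a⁻¹ * a1 * (b * b1⁻¹) := by
    apply Units.ext
    simp only [Units.val_mul, ha1]
    exact Ex
  have hyu : y = a1 * b1⁻¹ := by
    apply Units.ext
    simp only [Units.val_mul, ha1]
    exact Ey
  rw [hdu, hx1u, hy1u, hxu, hyu]
  simp only [symCls_mul_left, symCls_mul_right, symCls_inv_left, symCls_inv_right]
  rw [symCls_swap A a a1, symCls_swap A a b1]
  abel
end
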